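/- Let h ∈ (0,1] and c, c₂ be constants with h²c > c₂ > 0, and set C = (h²c − c₂) / ( 2(1+h²c)(1+c₂) ). Let λ > 0 satisfy 0 < λ/m < C. Let X_1,…,X_m be independent Bernoulli ({0,1}-valued) random variables, let ε_1,…,ε_m be i.i.d. Rademacher random variables independent of the X_i, and define ε_i'' = ε_i·(c+c₂)/2 − (c−c₂)/2. Then for any random variables Y_1,…,Y_m taking values in [0,1]: E_{ε} E_{X} E_{Y|X,ε} [ exp( (λ/m)·Σ_{i=1}^m X_i·( (ε_i + ε_i'') − ε_i''·(1−h²)·Y_i ) ) ] ≤ 1. -/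

import Mathlib

open MeasureTheory Real

/-! Pointwise, the `i`-th summand is at most `X i * ε̃ i`, where `ε̃ i = 1 + c₂` when `ε i = 1`
and `ε̃ i = -(1 + h²c)` when `ε i = -1`; this bound no longer involves `Y`. Its exponential
factorizes over the coordinates of the product space, and a single factor has mean
`1 - pᵢ + pᵢ (e^{tA} + e^{-tB}) / 2` with `A = 1 + c₂`, `B = 1 + h²c`. Comparing `e^{tA}` with
`1 / (1 - tA)` and `e^{-tB}` with `1 / (1 + tB)` shows `e^{tA} + e^{-tB} ≤ 2` for
`t ≤ (B - A) / (2AB)`, which is exactly the constant `C`. -/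

/-- A Rademacher variable realized from a fair coin: `+1` on `true`, `-1` on `false`. -/
noncomputable def rad (b : Bool) : ℝ := if b then 1 else -1

/-- The fair-coin distribution on `Bool`, realizing Rademacher random variables via `rad`. -/
noncomputable def radMeasure : Measure Bool := (PMF.uniformOfFintype Bool).toMeasure

/-- A Bernoulli (`{0,1}`-valued) variable realized from a coin: `1` on `true`, `0` on `false`. -/
noncomputable def ind (b : Bool) : ℝ := if b then 1 else 0

instance : IsProbabilityMeasure radMeasure := by
  unfold radMeasure; infer_instance

def skewRad (A B : ℝ) (b : Bool) : ℝ := if b then A else -B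

theorem exp_mul_add_exp_neg_mul_le_two {A B t : ℝ} (hA : 0 < A) (hAB : A < B) (ht : 0 ≤ t)
    (htAB : t ≤ (B - A) / (2 * A * B)) : exp (t * A) + exp (-(t * B)) ≤ 2 := by
  have hB : 0 < B := hA.trans hAB
  have htAB' : t * (2 * A * B) ≤ B - A := by rwa [← le_div_iff₀ (by positivity)]
  have hA' : t * A < 1 := by nlinarith
  have hB' : 0 < 1 + t * B := by positivity
  have expA : exp (t * A) ≤ 1 / (1 - t * A) :=
    exp_bound_div_one_sub_of_interval (by positivity) hA'
  have expB : exp (-(t * B)) ≤ 1 / (1 + t * B) := by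
    rw [exp_neg, ← one_div]
    exact one_div_le_one_div_of_le hB' (by linarith [add_one_le_exp (t * B)])
  have hsum : 1 / (1 - t * A) + 1 / (1 + t * B) ≤ 2 := by
    rw [div_add_div _ _ (by linarith) hB'.ne', div_le_iff₀ (by nlinarith)]
    nlinarith [mul_le_mul_of_nonneg_left htAB' ht]
  linarith

theorem rad_add_sub_le_skewRad {h c c₂ y : ℝ} (hh : h ^ 2 ≤ 1) (hc : 0 ≤ c) (hc₂ : 0 ≤ c₂)
    (hy : y ∈ Set.Icc (0 : ℝ) 1) (b : Bool) :
    (rad b + (rad b * ((c + c₂) / 2) - (c - c₂) / 2)) -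
        (rad b * ((c + c₂) / 2) - (c - c₂) / 2) * (1 - h ^ 2) * y ≤
      skewRad (1 + c₂) (1 + h ^ 2 * c) b := by
  obtain ⟨hy0, hy1⟩ := hy
  have hk : 0 ≤ 1 - h ^ 2 := by linarith
  cases b <;> simp only [rad, skewRad, Bool.false_eq_true, if_true, if_false]
  · nlinarith [mul_nonneg (mul_nonneg hc hk) (sub_nonneg.mpr hy1)]
  · nlinarith [mul_nonneg (mul_nonneg hc₂ hk) hy0]

theorem integral_radMeasure (f : Bool → ℝ) : ∫ b, f b ∂radMeasure = (f true + f false) / 2 := by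
  rw [radMeasure, PMF.integral_eq_sum, Fintype.sum_bool]
  simp [PMF.uniformOfFintype_apply]
  ring

theorem integral_bernoulli (q : NNReal) (hq : q ≤ 1) (f : Bool → ℝ) :
    ∫ b, f b ∂(PMF.bernoulli q hq).toMeasure = q * f true + (1 - q) * f false := by
  rw [PMF.integral_eq_sum, Fintype.sum_bool]
  simp only [PMF.bernoulli_apply, cond_true, cond_false, ENNReal.coe_toReal, smul_eq_mul,
    NNReal.coe_sub hq, NNReal.coe_one]

theorem integral_prod_pi_prod {ι α β 𝕜 : Type*} [Fintype ι] [RCLike 𝕜] [MeasurableSpace α]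
    [MeasurableSpace β] (μ : ι → Measure α) (ν : ι → Measure β) [∀ i, SigmaFinite (μ i)]
    [∀ i, SigmaFinite (ν i)] (f : ι → α → β → 𝕜) :
    ∫ ω, ∏ i, f i (ω.1 i) (ω.2 i) ∂(Measure.pi μ).prod (Measure.pi ν) =
      ∏ i, ∫ z, f i z.1 z.2 ∂(μ i).prod (ν i) := by
  rw [← (measurePreserving_arrowProdEquivProdArrow α β ι μ ν).integral_comp']
  exact integral_fintype_prod_eq_prod (fun i (z : α × β) => f i z.1 z.2)

theorem integral_exp_ind_mul_skewRad_le_one {A B t : ℝ} (hA : 0 < A) (hAB : A < B) (ht : 0 ≤ t)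
    (htAB : t ≤ (B - A) / (2 * A * B)) (q : NNReal) (hq : q ≤ 1) :
    ∫ z, exp (t * (ind z.1 * skewRad A B z.2)) ∂(PMF.bernoulli q hq).toMeasure.prod radMeasure
      ≤ 1 := by
  rw [integral_prod _ Integrable.of_finite, integral_bernoulli]
  simp only [integral_radMeasure, ind, skewRad, if_true, Bool.false_eq_true, if_false, one_mul,
    zero_mul, mul_zero, mul_neg, exp_zero]
  have hq' : (q : ℝ) ≤ 1 := hq
  nlinarith [exp_mul_add_exp_neg_mul_le_two hA hAB ht htAB, q.coe_nonneg]

/-- The key exponential-moment bound with two scaled and shifted Rademacher variables and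
arbitrary `[0,1]`-valued random variables `Y i` (which may depend on the `X`'s and `ε`'s).
The `X i` are independent Bernoulli variables (with arbitrary parameters `p i`) and the `ε i`
are i.i.d. Rademacher variables independent of the `X i`, realized on the canonical product
space `(Fin m → Bool) × (Fin m → Bool)`. -/
theorem stmt11 (m : ℕ)
    (h c c₂ : ℝ) (hh : h ∈ Set.Ioc (0 : ℝ) 1) (hc₂ : 0 < c₂) (hc : c₂ < h ^ 2 * c)
    (C lam : ℝ) (hC : C = (h ^ 2 * c - c₂) / (2 * (1 + h ^ 2 * c) * (1 + c₂)))
    (hlam0 : 0 < lam) (hlam : lam / m < C)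
    (p : Fin m → ENNReal) (hp : ∀ i, p i ≤ 1)
    (Y : Fin m → (Fin m → Bool) × (Fin m → Bool) → ℝ)
    (hY : ∀ i ω, Y i ω ∈ Set.Icc (0 : ℝ) 1) :
    (∫ ω : (Fin m → Bool) × (Fin m → Bool),
        Real.exp ((lam / m) * ∑ i,
          ind (ω.1 i) *
            ((rad (ω.2 i) + (rad (ω.2 i) * ((c + c₂) / 2) - (c - c₂) / 2)) -
              (rad (ω.2 i) * ((c + c₂) / 2) - (c - c₂) / 2) * (1 - h ^ 2) * Y i ω))
      ∂((Measure.pi fun i => (PMF.bernoulli (p i).toNNReal (by simpa using ENNReal.toNNReal_mono ENNReal.one_ne_top (hp i))).toMeasure).prod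
          (Measure.pi fun _ : Fin m => radMeasure))) ≤ 1 := by
  set t := lam / m
  have ht : 0 ≤ t := by positivity
  have hh2 : h ^ 2 ≤ 1 := pow_le_one₀ hh.1.le hh.2
  have hc0 : 0 ≤ c := nonneg_of_mul_nonneg_right (hc₂.trans hc).le (by have := hh.1; positivity)
  have htC : t ≤ ((1 + h ^ 2 * c) - (1 + c₂)) / (2 * (1 + c₂) * (1 + h ^ 2 * c)) :=
    hlam.le.trans_eq (by rw [hC]; ring)
  have hpointwise (ω : (Fin m → Bool) × (Fin m → Bool)) :
      exp (t * ∑ i, ind (ω.1 i) *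
          ((rad (ω.2 i) + (rad (ω.2 i) * ((c + c₂) / 2) - (c - c₂) / 2)) -
            (rad (ω.2 i) * ((c + c₂) / 2) - (c - c₂) / 2) * (1 - h ^ 2) * Y i ω)) ≤
        ∏ i, exp (t * (ind (ω.1 i) * skewRad (1 + c₂) (1 + h ^ 2 * c) (ω.2 i))) := by
    rw [← exp_sum, ← Finset.mul_sum]
    gcongr with i
    · unfold ind; split_ifs <;> norm_num
    · exact rad_add_sub_le_skewRad hh2 hc0 hc₂.le (hY i ω) (ω.2 i)
  refine (integral_mono .of_finite .of_finite hpointwise).trans ?_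
  rw [integral_prod_pi_prod _ _ fun _ a b => exp (t * (ind a * skewRad _ _ b))]
  refine Finset.prod_le_one (fun i _ => integral_nonneg fun _ => (exp_pos _).le) fun i _ => ?_
  exact integral_exp_ind_mul_skewRad_le_one (by positivity) (by linarith) ht htC _ _
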